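/- arXiv:2311.18426 — 4 statements merged into one kernel-verified Lean document; each statement's English description precedes it below -/
import Mathlib

section
/- Let n ≥ 1 be an integer, let f : ℝ → ℝ be (n+1)-times continuously differentiable, and let x, c ∈ ℝ. Then the limit, as α tends to n from the left, of (sgn(x−c))^{n−1}/Γ(n−α) · ∫_c^x f^{(n)}(t)/|x−t|^{α−n+1} dt equals (sgn(x−c))^n · f^{(n)}(x). -/
/-!
Put `β = n - α` and `g = f⁽ⁿ⁾`. The expression is `sgn(x - c)^(n-1)` times the Riemann–Liouville
integral of order `β` of `g` from `c` to `x`, so it suffices that this integral tends to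
`sgn(x - c) · g(x)` as `β → 0⁺`. For `c < x` split `g = g(x) + (g - g(x))`: the constant contributes
`g(x) (x - c)^β / Γ(β + 1) → g(x)`, and since `g` is `C¹`, hence Lipschitz on `[c, x]`, the rest is
at most `Γ(β)⁻¹ · K (x - c)^(β+1) / (β + 1)`, which tends to `0` because `1/Γ(β) = β/Γ(β + 1)`.
The case `x < c` follows by the reflection `t ↦ -t`.
-/

open Filter Set MeasureTheory intervalIntegral Topology

/-- For `a > b` this is minus the right-sided Riemann–Liouville integral; the absolute value
lets one formula cover both orientations of `[a, b]`. -/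
noncomputable def riemannLiouville (β : ℝ) (g : ℝ → ℝ) (a b : ℝ) : ℝ :=
  (Real.Gamma β)⁻¹ * ∫ t in a..b, g t * |b - t| ^ (β - 1)

lemma tendsto_Gamma_add_one_nhds_zero :
    Tendsto (fun β : ℝ => Real.Gamma (β + 1)) (𝓝 0) (𝓝 1) := by
  have hcont : ContinuousAt Real.Gamma 1 :=
    (Real.differentiableAt_Gamma fun m => by linarith [m.cast_nonneg (α := ℝ)]).continuousAt
  simpa [Real.Gamma_one, Function.comp_def] using
    hcont.tendsto.comp ((continuous_add_const (1 : ℝ)).tendsto' 0 1 (zero_add 1))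

lemma tendsto_inv_Gamma_nhdsGT_zero :
    Tendsto (fun β : ℝ => (Real.Gamma β)⁻¹) (𝓝[>] 0) (𝓝 0) := by
  have hquot : Tendsto (fun β : ℝ => β / Real.Gamma (β + 1)) (𝓝[>] 0) (𝓝 (0 / 1)) :=
    (tendsto_id.mono_left nhdsWithin_le_nhds).div
      (tendsto_Gamma_add_one_nhds_zero.mono_left nhdsWithin_le_nhds) one_ne_zero
  rw [zero_div] at hquot
  refine hquot.congr' ?_
  filter_upwards [self_mem_nhdsWithin] with β (hβ : 0 < β)
  rw [Real.Gamma_add_one hβ.ne', div_mul_cancel_left₀ hβ.ne']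

lemma integral_sub_rpow (a b : ℝ) {r : ℝ} (hr : -1 < r) :
    ∫ t in a..b, (b - t) ^ r = (b - a) ^ (r + 1) / (r + 1) := by
  rw [integral_comp_sub_left (fun s => s ^ r) b, sub_self, integral_rpow (Or.inl hr),
    Real.zero_rpow (by linarith), sub_zero]

lemma eqOn_abs_sub_rpow {a b : ℝ} (hab : a ≤ b) (r : ℝ) :
    EqOn (fun t => |b - t| ^ r) (fun t => (b - t) ^ r) (uIcc a b) := fun t ht => by
  rw [uIcc_of_le hab] at ht
  simp only [abs_of_nonneg (sub_nonneg.2 ht.2)]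

lemma intervalIntegrable_abs_sub_rpow {a b : ℝ} (hab : a ≤ b) {r : ℝ} (hr : -1 < r) :
    IntervalIntegrable (fun t => |b - t| ^ r) volume a b := by
  rw [intervalIntegrable_congr ((eqOn_abs_sub_rpow hab r).mono uIoc_subset_uIcc)]
  simpa using ((intervalIntegrable_rpow' (a := 0) (b := b - a) hr).comp_sub_left b).symm

lemma integral_abs_sub_rpow {a b : ℝ} (hab : a ≤ b) {r : ℝ} (hr : -1 < r) :
    ∫ t in a..b, |b - t| ^ r = (b - a) ^ (r + 1) / (r + 1) := by
  rw [integral_congr (eqOn_abs_sub_rpow hab r), integral_sub_rpow a b hr]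

lemma riemannLiouville_eq_add {β : ℝ} (hβ : 0 < β) {g : ℝ → ℝ} {a b : ℝ} (hab : a ≤ b)
    (hg : ContinuousOn g (uIcc a b)) :
    riemannLiouville β g a b =
      g b * ((b - a) ^ β / Real.Gamma (β + 1)) + riemannLiouville β (fun t => g t - g b) a b := by
  have hker := intervalIntegrable_abs_sub_rpow hab (r := β - 1) (by linarith)
  have hsplit : (fun t => g t * |b - t| ^ (β - 1)) =
      fun t => g b * |b - t| ^ (β - 1) + (g t - g b) * |b - t| ^ (β - 1) := by
    funext t; ring
  rw [riemannLiouville, riemannLiouville, hsplit,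
    integral_add (hker.const_mul _) (hker.continuousOn_mul (g := fun t => g t - g b)
      (hg.sub continuousOn_const)),
    intervalIntegral.integral_const_mul, integral_abs_sub_rpow hab (by linarith), sub_add_cancel,
    Real.Gamma_add_one hβ.ne']
  have := (Real.Gamma_pos_of_pos hβ).ne'
  field_simp

lemma abs_riemannLiouville_le {β : ℝ} (hβ : 0 < β) {h : ℝ → ℝ} {a b K : ℝ} (hab : a ≤ b)
    (hh : ∀ t ∈ Icc a b, |h t| ≤ K * |b - t|) :
    |riemannLiouville β h a b| ≤ (Real.Gamma β)⁻¹ * (K * ((b - a) ^ (β + 1) / (β + 1))) := by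
  have hpt : ∀ t ∈ Icc a b, ‖h t * |b - t| ^ (β - 1)‖ ≤ K * |b - t| ^ β := fun t ht =>
    calc ‖h t * |b - t| ^ (β - 1)‖ = |h t| * |b - t| ^ (β - 1) := by
          rw [Real.norm_eq_abs, abs_mul, abs_of_nonneg (Real.rpow_nonneg (abs_nonneg _) _)]
      _ ≤ K * |b - t| * |b - t| ^ (β - 1) := by gcongr; exact hh t ht
      _ = K * |b - t| ^ β := by
          rw [mul_assoc, ← Real.rpow_one_add' (abs_nonneg _) (by linarith), add_sub_cancel]
  have hint : |∫ t in a..b, h t * |b - t| ^ (β - 1)| ≤ K * ((b - a) ^ (β + 1) / (β + 1)) := by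
    rw [← integral_abs_sub_rpow hab (by linarith), ← intervalIntegral.integral_const_mul]
    exact norm_integral_le_of_norm_le hab
      (ae_of_all _ fun t ht => hpt t (Ioc_subset_Icc_self ht))
      ((intervalIntegrable_abs_sub_rpow hab (by linarith)).const_mul K)
  rw [riemannLiouville, abs_mul, abs_of_pos (inv_pos.2 (Real.Gamma_pos_of_pos hβ))]
  gcongr

lemma tendsto_riemannLiouville_nhdsGT_zero_of_lt {g : ℝ → ℝ} {a b : ℝ} {K : NNReal}
    (hab : a < b) (hg : LipschitzOnWith K g (Icc a b)) :
    Tendsto (fun β => riemannLiouville β g a b) (𝓝[>] 0) (𝓝 (g b)) := by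
  have hba : 0 < b - a := sub_pos.2 hab
  have hmain : Tendsto (fun β : ℝ => g b * ((b - a) ^ β / Real.Gamma (β + 1))) (𝓝[>] 0)
      (𝓝 (g b)) := by
    have hpow : Tendsto (fun β : ℝ => (b - a) ^ β) (𝓝 0) (𝓝 1) := by
      simpa using (Real.continuousAt_const_rpow (b := 0) hba.ne').tendsto
    simpa using ((hpow.div tendsto_Gamma_add_one_nhds_zero one_ne_zero).const_mul (g b)).mono_left
      nhdsWithin_le_nhds
  have hrem : Tendsto (fun β => riemannLiouville β (fun t => g t - g b) a b) (𝓝[>] 0) (𝓝 0) := by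
    have hcont : ContinuousAt (fun β : ℝ => (K : ℝ) * ((b - a) ^ (β + 1) / (β + 1))) 0 :=
      continuousAt_const.mul ((continuousAt_const.rpow (continuousAt_id.add continuousAt_const)
        (Or.inl hba.ne')).div (continuousAt_id.add continuousAt_const) (by norm_num))
    have hbound := tendsto_inv_Gamma_nhdsGT_zero.mul (hcont.tendsto.mono_left nhdsWithin_le_nhds)
    rw [zero_mul] at hbound
    refine squeeze_zero_norm' ?_ hbound
    filter_upwards [self_mem_nhdsWithin] with β (hβ : 0 < β)
    refine abs_riemannLiouville_le hβ hab.le fun t ht => ?_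
    simpa [Real.dist_eq, abs_sub_comm t b] using hg.dist_le_mul t ht b (right_mem_Icc.2 hab.le)
  rw [← add_zero (g b)]
  refine (hmain.add hrem).congr' ?_
  filter_upwards [self_mem_nhdsWithin] with β (hβ : 0 < β)
  exact (riemannLiouville_eq_add hβ hab.le (uIcc_of_le hab.le ▸ hg.continuousOn)).symm

lemma riemannLiouville_comp_neg (β : ℝ) (g : ℝ → ℝ) (a b : ℝ) :
    riemannLiouville β (fun s => g (-s)) (-a) (-b) = -riemannLiouville β g a b := by
  have hflip :
      ∫ s in -a..-b, g (-s) * |-b - s| ^ (β - 1) = ∫ t in b..a, g t * |b - t| ^ (β - 1) := by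
    rw [← integral_comp_neg (fun s => g (-s) * |-b - s| ^ (β - 1))]
    simp only [neg_neg, neg_sub_neg, abs_sub_comm]
  rw [riemannLiouville, riemannLiouville, hflip, integral_symm, mul_neg]

lemma tendsto_riemannLiouville_nhdsGT_zero {g : ℝ → ℝ} {a b : ℝ} {K : NNReal}
    (hg : LipschitzOnWith K g (uIcc a b)) :
    Tendsto (fun β => riemannLiouville β g a b) (𝓝[>] 0) (𝓝 (Real.sign (b - a) * g b)) := by
  rcases lt_trichotomy a b with hab | rfl | hba
  · rw [Real.sign_of_pos (sub_pos.2 hab), one_mul]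
    exact tendsto_riemannLiouville_nhdsGT_zero_of_lt hab (uIcc_of_le hab.le ▸ hg)
  · simp [riemannLiouville]
  · rw [uIcc_of_ge hba.le] at hg
    have hneg : LipschitzOnWith K (fun s => g (-s)) (Icc (-a) (-b)) :=
      LipschitzOnWith.of_dist_le_mul fun s hs t ht => by
        simpa [dist_neg_neg] using hg.dist_le_mul (-s) ⟨by linarith [hs.2], by linarith [hs.1]⟩
          (-t) ⟨by linarith [ht.2], by linarith [ht.1]⟩
    rw [Real.sign_of_neg (sub_neg.2 hba), neg_one_mul]
    simpa [riemannLiouville_comp_neg] using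
      (tendsto_riemannLiouville_nhdsGT_zero_of_lt (neg_lt_neg hba) hneg).neg

/-- For an `(n+1)`-times continuously differentiable `f : ℝ → ℝ`, the Caputo
derivative of order `α` with terminal `c` tends to `sgn(x-c)^n · f^(n)(x)` as `α → n⁻`. -/
theorem caputo_tendsto_of_order_tendsto_ceil (n : ℕ) (hn : 1 ≤ n) (f : ℝ → ℝ)
    (hf : ContDiff ℝ (n + 1 : ℕ) f) (x c : ℝ) :
    Filter.Tendsto
      (fun α : ℝ => (Real.sign (x - c)) ^ (n - 1) / Real.Gamma ((n : ℝ) - α) *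
        ∫ t in c..x, iteratedDeriv n f t / |x - t| ^ (α - (n : ℝ) + 1))
      (nhdsWithin (n : ℝ) (Set.Iio (n : ℝ)))
      (nhds ((Real.sign (x - c)) ^ n * iteratedDeriv n f x)) := by
  have hC1 : ContDiff ℝ 1 (iteratedDeriv n f) := by
    rw [iteratedDeriv_eq_iterate]
    exact ContDiff.iterate_deriv' 1 n (by rwa [add_comm])
  obtain ⟨K, hK⟩ :=
    hC1.locallyLipschitz.locallyLipschitzOn.exists_lipschitzOnWith_of_compact isCompact_uIcc
  have horder : Tendsto (fun α : ℝ => (n : ℝ) - α) (𝓝[<] (n : ℝ)) (𝓝[>] 0) := by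
    have hcont : ContinuousWithinAt (fun α : ℝ => (n : ℝ) - α) (Iio (n : ℝ)) n :=
      (continuous_const.sub continuous_id).continuousWithinAt
    simpa using hcont.tendsto_nhdsWithin (t := Ioi 0) fun α (hα : α < n) => sub_pos.2 hα
  have hlim := ((tendsto_riemannLiouville_nhdsGT_zero hK).comp horder).const_mul
    (Real.sign (x - c) ^ (n - 1))
  rw [← mul_assoc, ← pow_succ, Nat.sub_add_cancel hn] at hlim
  refine hlim.congr fun α => ?_
  simp only [Function.comp_apply, riemannLiouville, div_eq_mul_inv, mul_assoc]
  congr 2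
  refine integral_congr fun t _ => ?_
  rw [← Real.rpow_neg (abs_nonneg _)]
  ring_nf
end

section
/- Let n ≥ 1 be an integer, let f : ℝ → ℝ be n-times continuously differentiable, and let x, c ∈ ℝ. Then the limit, as α tends to n−1 from the right, of (sgn(x−c))^{n−1}/Γ(n−α) · ∫_c^x f^{(n)}(t)/|x−t|^{α−n+1} dt equals (sgn(x−c))^{n−1} · (f^{(n−1)}(x) − f^{(n−1)}(c)). -/
/-!
Write `α = n - 1 + β`. The Caputo kernel becomes `|x - t| ^ (-β)`, which for `|β| < 1/2` is dominated
by `|x - t| ^ (1/2) + |x - t| ^ (-1/2)`, integrable near `t = x`, and tends to `1` off `t = x`.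
Dominated convergence turns the integral into `∫_c^x f^{(n)} = f^{(n-1)}(x) - f^{(n-1)}(c)`,
while `Γ(n - α) = Γ(1 - β) → Γ(1) = 1`.
-/

open MeasureTheory Set Filter Topology Real intervalIntegral

theorem Real.rpow_le_rpow_add_rpow_neg {a γ s : ℝ} (ha : 0 < a) (hγ : |γ| ≤ s) :
    a ^ γ ≤ a ^ s + a ^ (-s) := by
  rcases le_total 1 a with ha1 | ha1
  · have := rpow_le_rpow_of_exponent_le ha1 (le_of_abs_le hγ)
    linarith [rpow_nonneg ha.le (-s)]
  · have := rpow_le_rpow_of_exponent_ge ha ha1 (neg_le_of_abs_le hγ)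
    linarith [rpow_nonneg ha.le s]

namespace intervalIntegral

theorem intervalIntegrable_abs_rpow {r : ℝ} (hr : -1 < r) (a b : ℝ) :
    IntervalIntegrable (fun s => |s| ^ r) volume a b := by
  have from_zero_of_nonneg {b : ℝ} (hb : 0 ≤ b) :
      IntervalIntegrable (fun s => |s| ^ r) volume 0 b := by
    have h := intervalIntegrable_rpow' hr (a := 0) (b := b)
    rw [intervalIntegrable_iff, uIoc_of_le hb] at h ⊢
    exact h.congr_fun (fun s hs => by rw [abs_of_pos hs.1]) measurableSet_Ioc
  have from_zero (b : ℝ) : IntervalIntegrable (fun s => |s| ^ r) volume 0 b := by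
    rcases le_total 0 b with hb | hb
    · exact from_zero_of_nonneg hb
    · rw [IntervalIntegrable.iff_comp_neg, neg_zero]
      simpa only [abs_neg] using from_zero_of_nonneg (neg_nonneg.mpr hb)
  exact (from_zero a).symm.trans (from_zero b)

theorem intervalIntegrable_abs_sub_rpow {r : ℝ} (hr : -1 < r) (x a b : ℝ) :
    IntervalIntegrable (fun t => |x - t| ^ r) volume a b := by
  simpa only [sub_sub_cancel] using
    (intervalIntegrable_abs_rpow hr (x - a) (x - b)).comp_sub_left x

theorem tendsto_integral_div_abs_sub_rpow_zero {g : ℝ → ℝ} {x c : ℝ}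
    (hg : ContinuousOn g (uIcc c x)) :
    Tendsto (fun β : ℝ => ∫ t in c..x, g t / |x - t| ^ β) (𝓝 0) (𝓝 (∫ t in c..x, g t)) := by
  obtain ⟨C, hC⟩ := isCompact_uIcc.exists_bound_of_continuousOn hg
  have hC0 : 0 ≤ C := (norm_nonneg _).trans (hC c left_mem_uIcc)
  refine tendsto_integral_filter_of_dominated_convergence
    (fun t => C * (|x - t| ^ (1 / 2 : ℝ) + |x - t| ^ (-(1 / 2) : ℝ))) ?_ ?_ ?_ ?_
  · refine .of_forall fun β => ?_
    exact ((hg.mono uIoc_subset_uIcc).aestronglyMeasurable measurableSet_uIoc).mul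
      (by fun_prop : Measurable fun t => (|x - t| ^ β)⁻¹).aestronglyMeasurable
  · filter_upwards [Ioo_mem_nhds (by norm_num : -(1 / 2 : ℝ) < 0) (by norm_num : (0 : ℝ) < 1 / 2)]
      with β hβ
    filter_upwards [volume.ae_ne x] with t htx ht
    have hpos : 0 < |x - t| := abs_pos.mpr (sub_ne_zero.mpr htx.symm)
    rw [norm_div, norm_of_nonneg (rpow_nonneg hpos.le β), div_eq_mul_inv, ← rpow_neg hpos.le]
    exact mul_le_mul (hC t (uIoc_subset_uIcc ht))
      (rpow_le_rpow_add_rpow_neg hpos (by rw [abs_neg]; exact (abs_lt.mpr hβ).le))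
      (rpow_nonneg hpos.le _) hC0
  · exact ((intervalIntegrable_abs_sub_rpow (by norm_num) x c x).add
      (intervalIntegrable_abs_sub_rpow (by norm_num) x c x)).const_mul C
  · filter_upwards [volume.ae_ne x] with t htx _
    have hpos : 0 < |x - t| := abs_pos.mpr (sub_ne_zero.mpr htx.symm)
    have hpow := (continuousAt_const_rpow (b := 0) hpos.ne').tendsto
    rw [rpow_zero] at hpow
    have h := (tendsto_const_nhds (x := g t)).div hpow one_ne_zero
    rwa [div_one] at h

theorem integral_iteratedDeriv_succ {f : ℝ → ℝ} {m : ℕ} (hf : ContDiff ℝ (m + 1) f) (a b : ℝ) :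
    ∫ t in a..b, iteratedDeriv (m + 1) f t = iteratedDeriv m f b - iteratedDeriv m f a := by
  have hcont : Continuous (deriv (iteratedDeriv m f)) :=
    iteratedDeriv_succ (f := f) ▸ hf.continuous_iteratedDeriv (m + 1) le_rfl
  rw [iteratedDeriv_succ]
  exact integral_deriv_eq_sub
    (fun t _ => (hf.differentiable_iteratedDeriv m (by norm_cast; omega)).differentiableAt)
    (hcont.intervalIntegrable a b)

end intervalIntegral

/-- For an `n`-times continuously differentiable `f : ℝ → ℝ`, the Caputo
derivative of order `α` with terminal `c` tends to
`sgn(x-c)^(n-1) · (f^(n-1)(x) - f^(n-1)(c))` as `α → (n-1)⁺`. -/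
theorem caputo_tendsto_of_order_tendsto_floor (n : ℕ) (hn : 1 ≤ n) (f : ℝ → ℝ)
    (hf : ContDiff ℝ (n : ℕ) f) (x c : ℝ) :
    Filter.Tendsto
      (fun α : ℝ => (Real.sign (x - c)) ^ (n - 1) / Real.Gamma ((n : ℝ) - α) *
        ∫ t in c..x, iteratedDeriv n f t / |x - t| ^ (α - (n : ℝ) + 1))
      (nhdsWithin ((n : ℝ) - 1) (Set.Ioi ((n : ℝ) - 1)))
      (nhds ((Real.sign (x - c)) ^ (n - 1) *
        (iteratedDeriv (n - 1) f x - iteratedDeriv (n - 1) f c))) := by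
  obtain ⟨m, rfl⟩ : ∃ m, n = m + 1 := ⟨n - 1, by omega⟩
  simp only [Nat.cast_add, Nat.cast_one, Nat.add_sub_cancel, add_sub_cancel_right]
  have hΓ : Tendsto (fun α : ℝ => Gamma (m + 1 - α)) (𝓝 m) (𝓝 1) := by
    have hcont := (differentiableAt_Gamma (s := 1) fun k hk => by
      linarith [k.cast_nonneg (α := ℝ)]).continuousAt.tendsto
    rw [Gamma_one] at hcont
    exact hcont.comp ((by fun_prop : Continuous fun α : ℝ => m + 1 - α).tendsto' m 1 (by ring))
  have hI := (tendsto_integral_div_abs_sub_rpow_zero (x := x) (c := c)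
    (hf.continuous_iteratedDeriv (m + 1) le_rfl).continuousOn).comp
    ((by fun_prop : Continuous fun α : ℝ => α - (m + 1) + 1).tendsto' m 0 (by ring))
  rw [integral_iteratedDeriv_succ hf] at hI
  have h := ((tendsto_const_nhds (x := (x - c).sign ^ m)).div hΓ one_ne_zero).mul hI
  rw [div_one] at h
  exact h.mono_left nhdsWithin_le_nhds
end

section
/- Let f : ℝ → ℝ be continuously differentiable and (μ,p)-uniformly convex for some μ ≥ 0, p > 0; let α ∈ (0,1) and x, c ∈ ℝ with x ≠ c. Then f′(x)(x−c)/(Γ(2−α)·|x−c|^α) − D^α_c f(x) ≥ (μ/(Γ(1−α)·(1+p−α))) · |x−c|^{1+p−α}. -/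
/-- The Caputo fractional derivative of order `α ∈ (0,1)` with terminal `c`. -/
noncomputable def caputo (α c : ℝ) (f : ℝ → ℝ) (x : ℝ) : ℝ :=
  (1 / Real.Gamma (1 - α)) * ∫ t in c..x, deriv f t / |x - t| ^ α

/-- `f : ℝ → ℝ` is `(μ,p)`-uniformly convex. -/
def UniformlyConvex (μ p : ℝ) (f : ℝ → ℝ) : Prop :=
  ∀ x y : ℝ, μ / (1 + p) * |y - x| ^ (1 + p) ≤ f y - f x - deriv f x * (y - x)

open MeasureTheory Real Set Filter
open scoped Topology

/-! For `c < x` put `h t = f t - f x - f' x * (t - x) - μ / (1 + p) * (x - t) ^ (1 + p)`. It is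
nonnegative by uniform convexity, and `h t * (x - t) ^ (-α) → 0` as `t → x⁻` because the Taylor
remainder is `o(x - t)`. Integrating `h' t * (x - t) ^ (-α)` by parts over `[c, x]` (an improper
integral, handled through the antitone function
`y ↦ ∫_c^y h' t (x - t) ^ (-α) - h y (x - y) ^ (-α)`) shows that it is `≤ 0`. As
`h' t = f' t - f' x + μ (x - t) ^ p`, this is the claimed bound once the Gamma factors are
multiplied out. The case `x < c` follows by the reflection `t ↦ -t`. -/

theorem intervalIntegrable_sub_rpow {β : ℝ} (hβ : -1 < β) (x c : ℝ) :
    IntervalIntegrable (fun t => (x - t) ^ β) volume c x := by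
  simpa using
    (intervalIntegral.intervalIntegrable_rpow' (a := x - c) (b := x - x) hβ).comp_sub_left x

theorem integral_sub_rpow_s5 {β : ℝ} (hβ : -1 < β) (x c : ℝ) :
    ∫ t in c..x, (x - t) ^ β = (x - c) ^ (β + 1) / (β + 1) := by
  rw [intervalIntegral.integral_comp_sub_left (fun s => s ^ β), sub_self,
    integral_rpow (Or.inl hβ), zero_rpow (by linarith), sub_zero]

theorem hasDerivAt_sub_rpow (β : ℝ) {x y : ℝ} (hy : y < x) :
    HasDerivAt (fun t => (x - t) ^ β) (-(β * (x - y) ^ (β - 1))) y :=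
  ((hasDerivAt_rpow_const (Or.inl (sub_pos.2 hy).ne')).comp y
    ((hasDerivAt_id y).const_sub x)).congr_deriv (by simp)

theorem tendsto_sub_rpow_nhdsLT {β : ℝ} (hβ : 0 < β) (x : ℝ) :
    Tendsto (fun y => (x - y) ^ β) (𝓝[<] x) (𝓝 0) := by
  have h := ((continuous_rpow_const hβ.le).comp (continuous_sub_left x)).tendsto x
  simp only [Function.comp_def, sub_self, zero_rpow hβ.ne'] at h
  exact h.mono_left nhdsWithin_le_nhds

theorem HasDerivAt.tendsto_remainder_mul_sub_rpow {f : ℝ → ℝ} {f' x α : ℝ}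
    (hf : HasDerivAt f f' x) (hα : α < 1) :
    Tendsto (fun y => (f y - f x - f' * (y - x)) * (x - y) ^ (-α)) (𝓝[<] x) (𝓝 0) := by
  have hrem : (fun y => f y - f x - f' * (y - x)) =o[𝓝[<] x] fun y => y - x := by
    simpa only [smul_eq_mul, mul_comm] using hf.isLittleO.mono nhdsWithin_le_nhds
  refine (hrem.mul_isBigO (Asymptotics.isBigO_refl (fun y => (x - y) ^ (-α)) _)).trans_tendsto ?_
  have h := (tendsto_sub_rpow_nhdsLT (by linarith : 0 < 1 - α) x).neg
  rw [neg_zero] at h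
  refine h.congr' ?_
  filter_upwards [self_mem_nhdsWithin] with y (hy : y < x)
  rw [sub_eq_add_neg 1 α, rpow_add (sub_pos.2 hy), rpow_one]
  ring

theorem integral_deriv_mul_le_of_tendsto {h h' w w' : ℝ → ℝ} {c x : ℝ} (hcx : c < x)
    (hh : ∀ y ∈ Ico c x, HasDerivAt h (h' y) y) (hw : ∀ y ∈ Ico c x, HasDerivAt w (w' y) y)
    (hcont : ContinuousOn (fun t => h' t * w t) (Ioo c x))
    (hint : IntervalIntegrable (fun t => h' t * w t) volume c x)
    (hnonneg : ∀ y ∈ Ioo c x, 0 ≤ h y * w' y)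
    (hlim : Tendsto (fun y => h y * w y) (𝓝[<] x) (𝓝 0)) :
    ∫ t in c..x, h' t * w t ≤ -(h c * w c) := by
  set Ψ : ℝ → ℝ := fun y => (∫ t in c..y, h' t * w t) - h y * w y with hΨ
  have hprim : ContinuousOn (fun y => ∫ t in c..y, h' t * w t) (Icc c x) := by
    simpa [uIcc_of_le hcx.le] using
      intervalIntegral.continuousOn_primitive_interval' hint left_mem_uIcc
  have hderiv : ∀ y ∈ Ioo c x, HasDerivAt Ψ (-(h y * w' y)) y := fun y hy =>
    ((intervalIntegral.integral_hasDerivAt_right (hint.mono_set (by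
        rw [uIcc_of_le hcx.le, uIcc_of_le hy.1.le]; exact Icc_subset_Icc_right hy.2.le))
      (hcont.stronglyMeasurableAtFilter isOpen_Ioo y hy)
      (hcont.continuousAt (isOpen_Ioo.mem_nhds hy))).sub
      ((hh y (Ioo_subset_Ico_self hy)).mul (hw y (Ioo_subset_Ico_self hy)))).congr_deriv
      (by ring)
  have hanti : AntitoneOn Ψ (Ico c x) := by
    refine antitoneOn_of_deriv_nonpos (convex_Ico c x)
      ((hprim.mono Ico_subset_Icc_self).sub fun y hy =>
        ((hh y hy).continuousAt.mul (hw y hy).continuousAt).continuousWithinAt) ?_ ?_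
    · rw [interior_Ico]
      exact fun y hy => (hderiv y hy).differentiableAt.differentiableWithinAt
    · rw [interior_Ico]
      intro y hy
      rw [(hderiv y hy).deriv, neg_nonpos]
      exact hnonneg y hy
  have hΨlim : Tendsto Ψ (𝓝[<] x) (𝓝 (∫ t in c..x, h' t * w t)) := by
    have h := ((hprim x (right_mem_Icc.2 hcx.le)).mono Ioo_subset_Icc_self).tendsto
    rw [nhdsWithin_Ioo_eq_nhdsLT hcx] at h
    simpa using h.sub hlim
  have hΨc : Ψ c = -(h c * w c) := by simp [hΨ]
  refine hΨc ▸ le_of_tendsto hΨlim ?_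
  filter_upwards [Ioo_mem_nhdsLT hcx] with y hy
  exact hanti (left_mem_Ico.2 hcx) (Ioo_subset_Ico_self hy) hy.1.le

theorem integral_deriv_add_mul_rpow_mul_sub_rpow {f : ℝ → ℝ} (hf : Continuous (deriv f)) (μ : ℝ)
    {p α : ℝ} (hp : 0 ≤ p) (hα : α < 1) {x c : ℝ} (hcx : c ≤ x) :
    ∫ t in c..x, (deriv f t - deriv f x + μ * (x - t) ^ p) * (x - t) ^ (-α) =
      μ * (x - c) ^ (1 + p - α) / (1 + p - α) -
        ∫ t in c..x, (deriv f x - deriv f t) * (x - t) ^ (-α) := by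
  have hae : ∀ᵐ t ∂volume, t ∈ uIoc c x →
      (deriv f t - deriv f x + μ * (x - t) ^ p) * (x - t) ^ (-α) =
        μ * (x - t) ^ (p - α) - (deriv f x - deriv f t) * (x - t) ^ (-α) := by
    filter_upwards [Measure.ae_ne volume x] with t htx ht
    have hxt : 0 < x - t := sub_pos.2 (lt_of_le_of_ne (uIoc_of_le hcx ▸ ht).2 htx)
    rw [sub_eq_add_neg p α, rpow_add hxt]
    ring
  rw [intervalIntegral.integral_congr_ae hae, intervalIntegral.integral_sub
    ((intervalIntegrable_sub_rpow (by linarith) x c).const_mul μ)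
    ((intervalIntegrable_sub_rpow (by linarith) x c).continuousOn_mul (by fun_prop)),
    intervalIntegral.integral_const_mul, integral_sub_rpow_s5 (by linarith)]
  ring_nf

theorem UniformlyConvex.le_integral_deriv_sub_mul_sub_rpow {f : ℝ → ℝ} {μ p : ℝ}
    (hconv : UniformlyConvex μ p f) (hf : ContDiff ℝ 1 f) (hp : 0 ≤ p) {α : ℝ}
    (hα₀ : 0 ≤ α) (hα₁ : α < 1) {x c : ℝ} (hcx : c < x) :
    μ * (x - c) ^ (1 + p - α) / (1 + p - α) ≤
      ∫ t in c..x, (deriv f x - deriv f t) * (x - t) ^ (-α) := by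
  have hf' : Continuous (deriv f) := hf.continuous_deriv le_rfl
  have hfd : Differentiable ℝ f := hf.differentiable one_ne_zero
  set h : ℝ → ℝ := fun t => f t - f x - deriv f x * (t - x) - μ / (1 + p) * (x - t) ^ (1 + p)
  set h' : ℝ → ℝ := fun t => deriv f t - deriv f x + μ * (x - t) ^ p
  have hh_nonneg : ∀ y ≤ x, 0 ≤ h y := fun y hy => by
    have := hconv x y
    rw [abs_sub_comm, abs_of_nonneg (sub_nonneg.2 hy)] at this
    simp only [h]
    linarith
  have hh : ∀ y ∈ Ico c x, HasDerivAt h (h' y) y := fun y hy => by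
    refine ((((hfd y).hasDerivAt.sub_const (f x)).sub
      (((hasDerivAt_id y).sub_const x).const_mul (deriv f x))).sub
      ((hasDerivAt_sub_rpow (1 + p) hy.2).const_mul (μ / (1 + p)))).congr_deriv ?_
    simp only [h', add_sub_cancel_left]
    field_simp
    ring
  have hw : ∀ y ∈ Ico c x, HasDerivAt (fun t => (x - t) ^ (-α)) (α * (x - y) ^ (-α - 1)) y :=
    fun y hy => (hasDerivAt_sub_rpow (-α) hy.2).congr_deriv (by ring)
  have hint : IntervalIntegrable (fun t => h' t * (x - t) ^ (-α)) volume c x :=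
    (intervalIntegrable_sub_rpow (by linarith) x c).continuousOn_mul (by fun_prop)
  have hcont : ContinuousOn (fun t => h' t * (x - t) ^ (-α)) (Ioo c x) :=
    (by fun_prop : Continuous h').continuousOn.mul
      ((continuousOn_const.sub continuousOn_id).rpow_const fun y hy =>
        Or.inl (sub_pos.2 hy.2).ne')
  have hlim : Tendsto (fun y => h y * (x - y) ^ (-α)) (𝓝[<] x) (𝓝 0) := by
    have := ((hfd x).hasDerivAt.tendsto_remainder_mul_sub_rpow hα₁).sub
      ((tendsto_sub_rpow_nhdsLT (by linarith : 0 < 1 + p - α) x).const_mul (μ / (1 + p)))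
    rw [mul_zero, sub_zero] at this
    refine this.congr' ?_
    filter_upwards [self_mem_nhdsWithin] with y (hy : y < x)
    rw [sub_eq_add_neg (1 + p) α, rpow_add (sub_pos.2 hy)]
    ring
  have hibp := integral_deriv_mul_le_of_tendsto hcx hh hw hcont hint
    (fun y hy => mul_nonneg (hh_nonneg y hy.2.le)
      (mul_nonneg hα₀ (rpow_nonneg (sub_pos.2 hy.2).le _))) hlim
  have : 0 ≤ h c * (x - c) ^ (-α) :=
    mul_nonneg (hh_nonneg c hcx.le) (rpow_nonneg (sub_pos.2 hcx).le _)
  linarith [integral_deriv_add_mul_rpow_mul_sub_rpow hf' μ hp hα₁ hcx.le]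

theorem deriv_mul_div_sub_caputo_eq {f : ℝ → ℝ} (hf : Continuous (deriv f)) {α : ℝ}
    (hα : α < 1) {x c : ℝ} (hcx : c < x) :
    deriv f x * (x - c) / (Gamma (2 - α) * |x - c| ^ α) - caputo α c f x =
      (∫ t in c..x, (deriv f x - deriv f t) * (x - t) ^ (-α)) / Gamma (1 - α) := by
  have hd : 0 < x - c := sub_pos.2 hcx
  have hint := intervalIntegrable_sub_rpow (by linarith : -1 < -α) x c
  have hcaputo : ∫ t in c..x, deriv f t / |x - t| ^ α = ∫ t in c..x, deriv f t * (x - t) ^ (-α) :=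
    intervalIntegral.integral_congr fun t ht => by
      have hxt : 0 ≤ x - t := sub_nonneg.2 (uIcc_of_le hcx.le ▸ ht).2
      simp only [abs_of_nonneg hxt, rpow_neg hxt, div_eq_mul_inv]
  have hΓ : Gamma (2 - α) = (1 - α) * Gamma (1 - α) := by
    rw [show 2 - α = 1 - α + 1 by ring, Gamma_add_one (by linarith)]
  have hpow : (x - c) / (x - c) ^ α = (x - c) ^ (1 - α) := by
    rw [rpow_sub hd, rpow_one]
  simp only [sub_mul]
  rw [caputo, hcaputo, intervalIntegral.integral_sub (hint.const_mul _) (hint.continuousOn_mul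
    hf.continuousOn), intervalIntegral.integral_const_mul, integral_sub_rpow_s5 (by linarith),
    neg_add_eq_sub, abs_of_pos hd, hΓ, ← hpow]
  have := (Gamma_pos_of_pos (by linarith : 0 < 1 - α)).ne'
  have : (1 - α) ≠ 0 := by linarith
  field_simp

theorem UniformlyConvex.comp_neg {μ p : ℝ} {f : ℝ → ℝ} (hconv : UniformlyConvex μ p f) :
    UniformlyConvex μ p (fun t => f (-t)) := fun x y => by
  have := hconv (-x) (-y)
  rw [← abs_neg, neg_sub_neg, neg_sub] at this
  rw [deriv_comp_neg]
  linarith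

theorem caputo_comp_neg (α c : ℝ) (f : ℝ → ℝ) (x : ℝ) :
    caputo α (-c) (fun t => f (-t)) (-x) = caputo α c f x := by
  have hintegrand : ∀ t, deriv (fun t => f (-t)) t / |-x - t| ^ α =
      -(deriv f (-t) / |x - -t| ^ α) := fun t => by
    rw [deriv_comp_neg, show -x - t = -(x - -t) by ring, abs_neg, neg_div]
  simp only [caputo, hintegrand, intervalIntegral.integral_neg,
    intervalIntegral.integral_comp_neg (fun t => deriv f t / |x - t| ^ α), neg_neg]
  rw [intervalIntegral.integral_symm, neg_neg]

theorem UniformlyConvex.le_deriv_mul_div_sub_caputo_of_lt {f : ℝ → ℝ} {μ p : ℝ}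
    (hconv : UniformlyConvex μ p f) (hf : ContDiff ℝ 1 f) (hp : 0 ≤ p) {α : ℝ}
    (hα : α ∈ Ioo (0 : ℝ) 1) {x c : ℝ} (hcx : c < x) :
    μ / (Gamma (1 - α) * (1 + p - α)) * |x - c| ^ (1 + p - α) ≤
      deriv f x * (x - c) / (Gamma (2 - α) * |x - c| ^ α) - caputo α c f x := by
  rw [deriv_mul_div_sub_caputo_eq (hf.continuous_deriv le_rfl) hα.2 hcx,
    abs_of_pos (sub_pos.2 hcx), div_mul_eq_mul_div, mul_comm (Gamma _), ← div_div]
  exact div_le_div_of_nonneg_right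
    (hconv.le_integral_deriv_sub_mul_sub_rpow hf hp hα.1.le hα.2 hcx)
    (Gamma_pos_of_pos (by linarith [hα.2])).le

theorem firstDeriv_sub_caputo_ge_of_uniformlyConvex_general (f : ℝ → ℝ) (hf : ContDiff ℝ 1 f)
    (μ p : ℝ) (hp : 0 < p) (hconv : UniformlyConvex μ p f)
    (α : ℝ) (hα : α ∈ Set.Ioo (0 : ℝ) 1) (x c : ℝ) (hxc : x ≠ c) :
    μ / (Real.Gamma (1 - α) * (1 + p - α)) * |x - c| ^ (1 + p - α) ≤
      deriv f x * (x - c) / (Real.Gamma (2 - α) * |x - c| ^ α) - caputo α c f x := by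
  rcases hxc.lt_or_gt with hxc | hcx
  · have := hconv.comp_neg.le_deriv_mul_div_sub_caputo_of_lt (hf.comp contDiff_neg) hp.le hα
      (neg_lt_neg hxc)
    rwa [caputo_comp_neg, deriv_comp_neg, neg_neg, ← abs_neg, neg_sub_neg, neg_sub,
      show -deriv f x * (c - x) = deriv f x * (x - c) by ring] at this
  · exact hconv.le_deriv_mul_div_sub_caputo_of_lt hf hp.le hα hcx

/-- for `(μ,p)`-uniformly convex `f`, the gap between the first-derivative
expression and the Caputo derivative is bounded below. -/
theorem firstDeriv_sub_caputo_ge_of_uniformlyConvex (f : ℝ → ℝ) (hf : ContDiff ℝ 1 f)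
    (μ p : ℝ) (hμ : 0 ≤ μ) (hp : 0 < p) (hconv : UniformlyConvex μ p f)
    (α : ℝ) (hα : α ∈ Set.Ioo (0 : ℝ) 1) (x c : ℝ) (hxc : x ≠ c) :
    μ / (Real.Gamma (1 - α) * (1 + p - α)) * |x - c| ^ (1 + p - α) ≤
      deriv f x * (x - c) / (Real.Gamma (2 - α) * |x - c| ^ α) - caputo α c f x :=
  firstDeriv_sub_caputo_ge_of_uniformlyConvex_general f hf μ p hp hconv α hα x c hxc
end

section
/- Let f : ℝ → ℝ be twice continuously differentiable, L-smooth, and μ-strongly convex with 0 ≤ μ ≤ L; let α ∈ (0,1) and β ≥ 0. Set γ = (1−α)/(2−α), K₁ = ((L+μ)/2)(β−γ), K₂ = ((L−μ)/2)(β+γ). Then for all x, c with x ≠ c: |δ^{α,β}_c f(x) − f′(x) − K₁(x−c)| ≤ K₂·|x−c|. -/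
/-- The Caputo fractional derivative of order `1 + α` (for `α ∈ (0,1)`) with terminal `c`. -/
noncomputable def caputoSucc (α c : ℝ) (f : ℝ → ℝ) (x : ℝ) : ℝ :=
  (Real.sign (x - c) / Real.Gamma (1 - α)) *
    ∫ t in c..x, deriv (deriv f) t / |x - t| ^ α

/-- The fractional gradient operator `δ^{α,β}_c f (x)`, with the convention that it is `0`
when `x = c`. -/
noncomputable def fracGrad (α β c : ℝ) (f : ℝ → ℝ) (x : ℝ) : ℝ :=
  if x = c then 0
  else (Real.Gamma (2 - α) * |x - c| ^ α / (x - c)) *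
    (caputo α c f x + β * |x - c| * caputoSucc α c f x)

/-- `f : ℝ → ℝ` is `L`-smooth. -/
def RSmooth (L : ℝ) (f : ℝ → ℝ) : Prop :=
  ∀ x y : ℝ, |f y - f x - deriv f x * (y - x)| ≤ L / 2 * (y - x) ^ 2

/-- `f : ℝ → ℝ` is `μ`-strongly convex. -/
def RStrongConvex (μ : ℝ) (f : ℝ → ℝ) : Prop :=
  ∀ x y : ℝ, μ / 2 * (y - x) ^ 2 ≤ f y - f x - deriv f x * (y - x)


/-!
With `m = (L + μ) / 2` and `r = (L - μ) / 2`, smoothness and strong convexity confine `f'` to a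
cone around a line, `|f' y - f' x - m (y - x)| ≤ r |y - x|`, and hence `|f'' - m| ≤ r`. After the
substitution `t = x - sign (x - c) u`, the operator `δ^{α,β}_c f (x)` is an average of `f'` plus
`β (x - c)` times an average of `f''`, both against the probability density
`(1 - α) d^(α - 1) u^(-α)` on `(0, d]`, `d = |x - c|`, whose mean is `γ d`. Averaging the two
pointwise estimates gives `f' x - γ m (x - c)` and `m` up to errors `γ r d` and `r`.
-/

open MeasureTheory Set

section SmoothStronglyConvex

variable {f : ℝ → ℝ} {L μ : ℝ}

theorem RStrongConvex.abs_deriv_sub_deriv_sub_le (hconv : RStrongConvex μ f)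
    (hsmooth : RSmooth L f) (x y : ℝ) :
    |deriv f y - deriv f x - (L + μ) / 2 * (y - x)| ≤ (L - μ) / 2 * |y - x| := by
  rcases eq_or_ne y x with rfl | hyx
  · simp
  have hupper : (deriv f y - deriv f x) * (y - x) ≤ L * (y - x) ^ 2 := by
    linear_combination (abs_le.mp (hsmooth x y)).2 + (abs_le.mp (hsmooth y x)).2
  have hlower : μ * (y - x) ^ 2 ≤ (deriv f y - deriv f x) * (y - x) := by
    linear_combination hconv x y + hconv y x
  have hmul : |(deriv f y - deriv f x - (L + μ) / 2 * (y - x)) * (y - x)|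
      ≤ (L - μ) / 2 * |y - x| * |y - x| := by
    rw [mul_assoc, ← abs_mul, abs_mul_self, abs_le]
    exact ⟨by linear_combination hlower, by linear_combination hupper⟩
  rw [abs_mul] at hmul
  exact le_of_mul_le_mul_right hmul (abs_pos.mpr (sub_ne_zero.mpr hyx))

theorem RStrongConvex.abs_deriv_deriv_sub_le (hconv : RStrongConvex μ f)
    (hsmooth : RSmooth L f) {x : ℝ} (hx : DifferentiableAt ℝ (deriv f) x) :
    |deriv (deriv f) x - (L + μ) / 2| ≤ (L - μ) / 2 := by
  have hslope := (hasDerivAt_iff_tendsto_slope.mp hx.hasDerivAt).sub_const ((L + μ) / 2) |>.abs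
  refine le_of_tendsto hslope ?_
  filter_upwards [self_mem_nhdsWithin] with y hyx
  have hyx : y - x ≠ 0 := sub_ne_zero.mpr hyx
  rw [slope_def_field, div_sub' hyx, abs_div, div_le_iff₀ (abs_pos.mpr hyx)]
  simpa only [mul_comm] using hconv.abs_deriv_sub_deriv_sub_le hsmooth x y

end SmoothStronglyConvex

section WeightedIntegral

variable {α d : ℝ}

theorem intervalIntegrable_div_rpow (hα : α < 1) (hd : 0 ≤ d) {P : ℝ → ℝ}
    (hP : ContinuousOn P (Icc 0 d)) : IntervalIntegrable (fun u => P u / u ^ α) volume 0 d := by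
  have hweight : IntervalIntegrable (fun u : ℝ => u ^ (-α)) volume 0 d :=
    intervalIntegral.intervalIntegrable_rpow' (by linarith)
  refine (hweight.continuousOn_mul (by rwa [uIcc_of_le hd])).congr fun u hu => ?_
  rw [uIoc_of_le hd] at hu
  simp only [Real.rpow_neg hu.1.le, div_eq_mul_inv]

theorem integral_affine_div_rpow (hα : α < 1) (hd : 0 ≤ d) (a b : ℝ) :
    ∫ u in 0..d, (a + b * u) / u ^ α =
      a * (d ^ (1 - α) / (1 - α)) + b * (d ^ (2 - α) / (2 - α)) := by
  have hsplit : EqOn (fun u : ℝ => (a + b * u) / u ^ α) (fun u => a * u ^ (-α) + b * u ^ (1 - α))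
      (uIcc 0 d) := fun u hu => by
    rw [uIcc_of_le hd] at hu
    dsimp only
    rw [show 1 - α = 1 + -α by ring, Real.rpow_add' hu.1 (by linarith), Real.rpow_one,
      Real.rpow_neg hu.1]
    ring
  have hint : ∀ r : ℝ, -1 < r → ∫ u in 0..d, u ^ r = d ^ (r + 1) / (r + 1) := fun r hr => by
    rw [integral_rpow (Or.inl hr), Real.zero_rpow (by linarith), sub_zero]
  rw [intervalIntegral.integral_congr hsplit, intervalIntegral.integral_add,
    intervalIntegral.integral_const_mul, intervalIntegral.integral_const_mul, hint _ (by linarith),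
    hint _ (by linarith), show -α + 1 = 1 - α by ring, show 1 - α + 1 = 2 - α by ring]
  · exact (intervalIntegral.intervalIntegrable_rpow' (by linarith)).const_mul a
  · exact (intervalIntegral.intervalIntegrable_rpow' (by linarith)).const_mul b

theorem abs_integral_div_rpow_le (hα : α < 1) (hd : 0 ≤ d) {Q E : ℝ → ℝ}
    (hE : ContinuousOn E (Icc 0 d)) (hQE : ∀ u ∈ Ioc 0 d, |Q u| ≤ E u) :
    |∫ u in 0..d, Q u / u ^ α| ≤ ∫ u in 0..d, E u / u ^ α := by
  refine intervalIntegral.norm_integral_le_of_norm_le (f := fun u => Q u / u ^ α) hd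
    (ae_of_all _ fun u hu => ?_)
    (intervalIntegrable_div_rpow hα hd hE)
  have hpos := Real.rpow_pos_of_pos hu.1 α
  rw [Real.norm_eq_abs, abs_div, abs_of_pos hpos]
  exact div_le_div_of_nonneg_right (hQE u hu) hpos.le

/-- The mean of `P` against the probability density `(1 - α) d ^ (α - 1) u ^ (-α)` on `(0, d]`. -/
noncomputable def caputoMean (α d : ℝ) (P : ℝ → ℝ) : ℝ :=
  (1 - α) * d ^ (α - 1) * ∫ u in 0..d, P u / u ^ α

theorem caputoMean_affine (hα : α < 1) (hd : 0 < d) (a b : ℝ) :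
    caputoMean α d (fun u => a + b * u) = a + (1 - α) / (2 - α) * b * d := by
  have h1α : 1 - α ≠ 0 := by linarith
  have h2α : 2 - α ≠ 0 := by linarith
  have hinv : d ^ (α - 1) * d ^ (1 - α) = 1 := by
    rw [← Real.rpow_add hd, sub_add_sub_cancel', sub_self, Real.rpow_zero]
  rw [caputoMean, integral_affine_div_rpow hα hd.le,
    show 2 - α = (1 - α) + 1 by ring, Real.rpow_add_one hd.ne', ← show 2 - α = (1 - α) + 1 by ring]
  field_simp
  linear_combination (a * (2 - α) + (1 - α) * b * d) * hinv

theorem abs_caputoMean_sub_le (hα : α < 1) (hd : 0 < d) {P : ℝ → ℝ}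
    (hP : ContinuousOn P (Icc 0 d)) {a b e₀ e₁ : ℝ}
    (hPE : ∀ u ∈ Ioc 0 d, |P u - (a + b * u)| ≤ e₀ + e₁ * u) :
    |caputoMean α d P - (a + (1 - α) / (2 - α) * b * d)| ≤ e₀ + (1 - α) / (2 - α) * e₁ * d := by
  have hw : 0 ≤ (1 - α) * d ^ (α - 1) :=
    mul_nonneg (by linarith) (Real.rpow_pos_of_pos hd _).le
  rw [← caputoMean_affine hα hd, ← caputoMean_affine hα hd, caputoMean, caputoMean, caputoMean,
    ← mul_sub, ← intervalIntegral.integral_sub (intervalIntegrable_div_rpow hα hd.le hP)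
      (intervalIntegrable_div_rpow hα hd.le (by fun_prop)), abs_mul, abs_of_nonneg hw]
  simp_rw [← sub_div]
  exact mul_le_mul_of_nonneg_left (abs_integral_div_rpow_le hα hd.le (by fun_prop) hPE) hw

theorem integral_div_abs_sub_rpow (g : ℝ → ℝ) (α x c : ℝ) :
    ∫ t in c..x, g t / |x - t| ^ α =
      Real.sign (x - c) * ∫ u in 0..|x - c|, g (x - Real.sign (x - c) * u) / u ^ α := by
  rcases lt_trichotomy c x with h | rfl | h
  · rw [Real.sign_of_pos (sub_pos.mpr h), abs_of_pos (sub_pos.mpr h), one_mul, ← sub_self x,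
      ← intervalIntegral.integral_comp_sub_left]
    refine intervalIntegral.integral_congr fun t ht => ?_
    rw [uIcc_of_le h.le] at ht
    simp [abs_of_nonneg (sub_nonneg.mpr ht.2)]
  · simp
  · rw [Real.sign_of_neg (sub_neg.mpr h), abs_of_neg (sub_neg.mpr h), neg_sub, ← sub_self x,
      ← intervalIntegral.integral_comp_sub_right, intervalIntegral.integral_symm, neg_one_mul]
    refine congrArg _ (intervalIntegral.integral_congr fun t ht => ?_)
    rw [uIcc_of_le h.le] at ht
    simp [abs_of_nonpos (sub_nonpos.mpr ht.1)]

end WeightedIntegral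

theorem Real.sign_mul_abs (r : ℝ) : Real.sign r * |r| = r := by
  rcases lt_trichotomy r 0 with h | rfl | h
  · rw [Real.sign_of_neg h, abs_of_neg h, neg_one_mul, neg_neg]
  · simp
  · rw [Real.sign_of_pos h, abs_of_pos h, one_mul]

theorem Real.abs_sign_of_ne_zero {r : ℝ} (hr : r ≠ 0) : |Real.sign r| = 1 := by
  rcases Real.sign_apply_eq_of_ne_zero r hr with h | h <;> simp [h]

theorem fracGrad_eq_caputoMean (f : ℝ → ℝ) {α : ℝ} (hα : α < 1) (β : ℝ) {x c : ℝ} (hxc : x ≠ c) :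
    fracGrad α β c f x =
      caputoMean α |x - c| (fun u => deriv f (x - Real.sign (x - c) * u)) +
        Real.sign (x - c) * β * |x - c| *
          caputoMean α |x - c| (fun u => deriv (deriv f) (x - Real.sign (x - c) * u)) := by
  have hΓ : Real.Gamma (2 - α) = (1 - α) * Real.Gamma (1 - α) := by
    rw [show 2 - α = (1 - α) + 1 by ring, Real.Gamma_add_one (by linarith)]
  have hΓpos : 0 < Real.Gamma (1 - α) := Real.Gamma_pos_of_pos (by linarith)
  have hd : 0 < |x - c| := abs_pos.mpr (sub_ne_zero.mpr hxc)
  have hpow : |x - c| ^ α = |x - c| ^ (α - 1) * |x - c| := by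
    rw [← Real.rpow_add_one hd.ne', sub_add_cancel]
  rw [fracGrad, if_neg hxc, caputo, caputoSucc, integral_div_abs_sub_rpow,
    integral_div_abs_sub_rpow, caputoMean, caputoMean, hΓ, hpow]
  rcases lt_or_gt_of_ne hxc with h | h
  · rw [Real.sign_of_neg (sub_neg.mpr h)]
    field_simp
    rw [abs_of_neg (sub_neg.mpr h)]
    ring
  · rw [Real.sign_of_pos (sub_pos.mpr h)]
    field_simp
    rw [abs_of_pos (sub_pos.mpr h)]

section Estimates

variable {f : ℝ → ℝ} {L μ α d : ℝ}

theorem RStrongConvex.abs_caputoMean_deriv_sub_le (hconv : RStrongConvex μ f)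
    (hsmooth : RSmooth L f) (hcont : Continuous (deriv f)) (hα : α < 1) (hd : 0 < d) {s : ℝ}
    (hs : |s| = 1) (x : ℝ) :
    |caputoMean α d (fun u => deriv f (x - s * u)) -
        (deriv f x - (1 - α) / (2 - α) * ((L + μ) / 2) * (s * d))| ≤
      (1 - α) / (2 - α) * ((L - μ) / 2) * d := by
  have hmean := abs_caputoMean_sub_le (P := fun u => deriv f (x - s * u)) hα hd (by fun_prop)
    (a := deriv f x) (b := -(s * ((L + μ) / 2))) (e₀ := 0) (e₁ := (L - μ) / 2) fun u hu => by
      have hbound := hconv.abs_deriv_sub_deriv_sub_le hsmooth x (x - s * u)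
      rw [sub_sub_cancel_left, abs_neg, abs_mul, hs, one_mul, abs_of_pos hu.1, sub_sub] at hbound
      rwa [zero_add, show -(s * ((L + μ) / 2)) * u = (L + μ) / 2 * -(s * u) by ring]
  convert hmean using 3 <;> ring

theorem RStrongConvex.abs_caputoMean_deriv_deriv_sub_le (hconv : RStrongConvex μ f)
    (hsmooth : RSmooth L f) (hdiff : Differentiable ℝ (deriv f))
    (hcont : Continuous (deriv (deriv f))) (hα : α < 1) (hd : 0 < d) (x s : ℝ) :
    |caputoMean α d (fun u => deriv (deriv f) (x - s * u)) - (L + μ) / 2| ≤ (L - μ) / 2 := by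
  simpa using abs_caputoMean_sub_le (P := fun u => deriv (deriv f) (x - s * u)) hα hd
    (by fun_prop) (a := (L + μ) / 2) (b := 0) (e₀ := (L - μ) / 2) (e₁ := 0) fun u _ => by
      simpa using hconv.abs_deriv_deriv_sub_le hsmooth (hdiff (x - s * u))

end Estimates

theorem fracGrad_approx_of_beta_nonneg_general (f : ℝ → ℝ) (hf : ContDiff ℝ 2 f) (L μ : ℝ)
    (hsmooth : RSmooth L f) (hconv : RStrongConvex μ f)
    (α β : ℝ) (hα : α ∈ Set.Ioo (0 : ℝ) 1) (hβ : 0 ≤ β)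
    (γ K₁ K₂ : ℝ) (hγ : γ = (1 - α) / (2 - α))
    (hK₁ : K₁ = (L + μ) / 2 * (β - γ)) (hK₂ : K₂ = (L - μ) / 2 * (β + γ)) :
    ∀ x c : ℝ, x ≠ c →
      |fracGrad α β c f x - deriv f x - K₁ * (x - c)| ≤ K₂ * |x - c| := by
  intro x c hxc
  have hf' : ContDiff ℝ 1 (deriv f) := hf.deriv' (n := 1)
  rw [fracGrad_eq_caputoMean f hα.2 β hxc]
  set s := Real.sign (x - c)
  set d := |x - c|
  have hd : 0 < d := abs_pos.mpr (sub_ne_zero.mpr hxc)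
  have hs : |s| = 1 := Real.abs_sign_of_ne_zero (sub_ne_zero.mpr hxc)
  have h₁ := hconv.abs_caputoMean_deriv_sub_le hsmooth hf'.continuous hα.2 hd hs x
  have h₂ := hconv.abs_caputoMean_deriv_deriv_sub_le hsmooth (hf'.differentiable one_ne_zero)
    (hf'.continuous_deriv le_rfl) hα.2 hd x s
  rw [← hγ] at h₁
  set M₁ := caputoMean α d (fun u => deriv f (x - s * u))
  set M₂ := caputoMean α d (fun u => deriv (deriv f) (x - s * u))
  calc |M₁ + s * β * d * M₂ - deriv f x - K₁ * (x - c)|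
      = |(M₁ - (deriv f x - γ * ((L + μ) / 2) * (s * d))) +
          s * (β * d) * (M₂ - (L + μ) / 2)| := by
        rw [← Real.sign_mul_abs (x - c), hK₁]; congr 1; ring
    _ ≤ |M₁ - (deriv f x - γ * ((L + μ) / 2) * (s * d))| + β * d * |M₂ - (L + μ) / 2| := by
        grw [abs_add_le, abs_mul, abs_mul, hs, one_mul, abs_of_nonneg (mul_nonneg hβ hd.le)]
    _ ≤ γ * ((L - μ) / 2) * d + β * d * ((L - μ) / 2) := by gcongr
    _ = K₂ * d := by rw [hK₂]; ring

/-- approximation of the fractional gradient operator by the first derivative,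
case `β ≥ 0`. -/
theorem fracGrad_approx_of_beta_nonneg (f : ℝ → ℝ) (hf : ContDiff ℝ 2 f) (L μ : ℝ)
    (hμ : 0 ≤ μ) (hμL : μ ≤ L) (hsmooth : RSmooth L f) (hconv : RStrongConvex μ f)
    (α β : ℝ) (hα : α ∈ Set.Ioo (0 : ℝ) 1) (hβ : 0 ≤ β)
    (γ K₁ K₂ : ℝ) (hγ : γ = (1 - α) / (2 - α))
    (hK₁ : K₁ = (L + μ) / 2 * (β - γ)) (hK₂ : K₂ = (L - μ) / 2 * (β + γ)) :
    ∀ x c : ℝ, x ≠ c →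
      |fracGrad α β c f x - deriv f x - K₁ * (x - c)| ≤ K₂ * |x - c| :=
  fracGrad_approx_of_beta_nonneg_general f hf L μ hsmooth hconv α β hα hβ γ K₁ K₂ hγ hK₁ hK₂
end
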